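/- For 0 < b < 1, q > 0, w ≥ 0, and any δ with (1−b)/(b+N−1) < δ < (1−b)/b for a positive integer N: if the truncated series f_N(w;δ) = (1+δ) + ((b−1+δb)/(b+q+1))w + Σ_{i=2}^{N} (b−1+δ(b+i−1)) · [b(b+1)···(b+i−2)]/[(b+q+1)···(b+q+i)] · wⁱ/i! is nonnegative, then M(b−1, b+q+1, w) + δ·M(b, b+q+1, w) ≥ 0, i.e., M(b−1,b+q+1,w)/M(b,b+q+1,w) ≥ −δ. -/

import Mathlib

/-!
Termwise, `M(b-1,c,w) + δ M(b,c,w)` has `i`-th coefficient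
`(b - 1 + δ (b + i - 1)) (b)_{i-1} / (c)_i` for `i ≥ 1`, since `(b-1)_i = (b-1) (b)_{i-1}` and
`(b)_i = (b)_{i-1} (b + i - 1)`. The lower bound on `δ` makes every coefficient with `i > N`
nonnegative, so for `w ≥ 0` the series is at least its truncation `f_N(w; δ)`. Dividing by
`M(b,c,w) ≥ 1` gives the bound on the ratio.
-/

/-- Kummer's confluent hypergeometric function `M(a, c, w)`. -/
noncomputable def kummerM (a c w : ℝ) : ℝ :=
  ∑' i : ℕ, ((ascPochhammer ℝ i).eval a / (ascPochhammer ℝ i).eval c) * w ^ i / (Nat.factorial i)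

/-- The Beta function as an integral. -/
noncomputable def betaFn (x y : ℝ) : ℝ :=
  ∫ t in (0:ℝ)..1, t ^ (x - 1) * (1 - t) ^ (y - 1)

noncomputable def kummerTerm (a c w : ℝ) (i : ℕ) : ℝ :=
  ((ascPochhammer ℝ i).eval a / (ascPochhammer ℝ i).eval c) * w ^ i / (Nat.factorial i)

theorem kummerM_eq_tsum_kummerTerm (a c w : ℝ) : kummerM a c w = ∑' i, kummerTerm a c w i := rfl

theorem kummerTerm_zero (a c w : ℝ) : kummerTerm a c w 0 = 1 := by
  simp [kummerTerm]

theorem ascPochhammer_succ_eval_left (n : ℕ) (x : ℝ) :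
    (ascPochhammer ℝ (n + 1)).eval x = x * (ascPochhammer ℝ n).eval (x + 1) := by
  simp [ascPochhammer_succ_left]

theorem ascPochhammer_eval_nonneg {x : ℝ} (hx : 0 ≤ x) (n : ℕ) :
    0 ≤ (ascPochhammer ℝ n).eval x := by
  induction n with
  | zero => simp
  | succ n ih =>
    rw [ascPochhammer_succ_eval]
    positivity

theorem abs_ascPochhammer_eval_le {a c : ℝ} (hac : |a| ≤ c) (n : ℕ) :
    |(ascPochhammer ℝ n).eval a| ≤ (ascPochhammer ℝ n).eval c := by
  induction n with
  | zero => simp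
  | succ n ih =>
    have hc : 0 ≤ c := (abs_nonneg a).trans hac
    have hterm : |a + n| ≤ c + n := (abs_add_le a n).trans (by simpa using hac)
    rw [ascPochhammer_succ_eval, ascPochhammer_succ_eval, abs_mul]
    exact mul_le_mul ih hterm (abs_nonneg _) (ascPochhammer_eval_nonneg hc n)

theorem summable_kummerTerm {a c : ℝ} (w : ℝ) (hac : |a| ≤ c) :
    Summable (kummerTerm a c w) := by
  refine .of_norm_bounded (Real.summable_pow_div_factorial |w|) fun i => ?_
  have hPc := ascPochhammer_eval_nonneg ((abs_nonneg a).trans hac) i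
  calc ‖kummerTerm a c w i‖
      = |(ascPochhammer ℝ i).eval a| / (ascPochhammer ℝ i).eval c * |w| ^ i / i.factorial := by
        simp [kummerTerm, abs_of_nonneg hPc]
    _ ≤ 1 * |w| ^ i / i.factorial := by
        gcongr
        exact div_le_one_of_le₀ (abs_ascPochhammer_eval_le hac i) hPc
    _ = |w| ^ i / i.factorial := by rw [one_mul]

theorem kummerTerm_nonneg {a c w : ℝ} (ha : 0 ≤ a) (hc : 0 ≤ c) (hw : 0 ≤ w) (i : ℕ) :
    0 ≤ kummerTerm a c w i := by
  have := ascPochhammer_eval_nonneg ha i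
  have := ascPochhammer_eval_nonneg hc i
  unfold kummerTerm
  positivity

theorem one_le_kummerM {a c w : ℝ} (ha : 0 ≤ a) (hac : a ≤ c) (hw : 0 ≤ w) :
    1 ≤ kummerM a c w := by
  rw [kummerM_eq_tsum_kummerTerm, ← kummerTerm_zero a c w]
  exact (summable_kummerTerm w (by rwa [abs_of_nonneg ha])).le_tsum 0
    fun i _ => kummerTerm_nonneg ha (ha.trans hac) hw i

theorem kummerTerm_sub_one_add_mul {b c w δ : ℝ} {i : ℕ} (hi : 1 ≤ i) :
    kummerTerm (b - 1) c w i + δ * kummerTerm b c w i =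
      (b - 1 + δ * (b + i - 1)) *
        ((ascPochhammer ℝ (i - 1)).eval b / (ascPochhammer ℝ i).eval c) * w ^ i /
          i.factorial := by
  obtain ⟨k, rfl⟩ := Nat.exists_eq_add_of_le' hi
  rw [Nat.add_sub_cancel, kummerTerm, kummerTerm, ascPochhammer_succ_eval_left k (b - 1),
    sub_add_cancel, ascPochhammer_succ_eval k b]
  push_cast
  ring

theorem sum_range_kummerTerm_sub_one_add_mul {b c w δ : ℝ} {N : ℕ} (hN : 0 < N) :
    ∑ i ∈ Finset.range (N + 1), (kummerTerm (b - 1) c w i + δ * kummerTerm b c w i) =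
      (1 + δ) + ((b - 1 + δ * b) / c) * w +
        ∑ i ∈ Finset.Icc 2 N, (b - 1 + δ * (b + i - 1)) *
          ((ascPochhammer ℝ (i - 1)).eval b / (ascPochhammer ℝ i).eval c) *
          w ^ i / i.factorial := by
  have hterm : ∀ i ∈ Finset.Icc 2 N, kummerTerm (b - 1) c w i + δ * kummerTerm b c w i =
      (b - 1 + δ * (b + i - 1)) *
        ((ascPochhammer ℝ (i - 1)).eval b / (ascPochhammer ℝ i).eval c) * w ^ i / i.factorial :=
    fun i hi => kummerTerm_sub_one_add_mul (one_le_two.trans (Finset.mem_Icc.1 hi).1)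
  rw [Finset.sum_range_eq_add_Ico _ N.add_one_pos, Finset.Ico_add_one_right_eq_Icc,
    ← Finset.add_sum_Ioc_eq_sum_Icc hN, ← Finset.Icc_add_one_left_eq_Ioc, one_add_one_eq_two,
    Finset.sum_congr rfl hterm, kummerTerm_sub_one_add_mul le_rfl, kummerTerm_zero, kummerTerm_zero]
  simp only [Nat.cast_one, add_sub_cancel_right, tsub_self, ascPochhammer_zero, ascPochhammer_one,
    Polynomial.eval_one, Polynomial.eval_X, pow_one, Nat.factorial_one]
  ring

theorem sum_range_le_kummerM_sub_one_add_mul {b c w δ : ℝ} (N : ℕ) (hb : 0 ≤ b)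
    (hbc : b ≤ c) (hc : 1 ≤ c) (hw : 0 ≤ w) (hδ : 0 ≤ δ)
    (hcoef : 0 ≤ b - 1 + δ * (b + N)) :
    ∑ i ∈ Finset.range (N + 1), (kummerTerm (b - 1) c w i + δ * kummerTerm b c w i) ≤
      kummerM (b - 1) c w + δ * kummerM b c w := by
  have hS₁ : Summable (kummerTerm (b - 1) c w) :=
    summable_kummerTerm w (abs_le.2 ⟨by linarith, by linarith⟩)
  have hS₂ : Summable (kummerTerm b c w) := summable_kummerTerm w (by rwa [abs_of_nonneg hb])
  rw [kummerM_eq_tsum_kummerTerm, kummerM_eq_tsum_kummerTerm, ← tsum_mul_left,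
    ← hS₁.tsum_add (hS₂.mul_left δ)]
  refine (hS₁.add (hS₂.mul_left δ)).sum_le_tsum _ fun i hi => ?_
  have hNi : N + 1 ≤ i := not_lt.1 (Finset.mem_range.not.1 hi)
  have hNi' : (N : ℝ) + 1 ≤ i := mod_cast hNi
  have := ascPochhammer_eval_nonneg hb (i - 1)
  have := ascPochhammer_eval_nonneg (hb.trans hbc) i
  have : 0 ≤ b - 1 + δ * (b + i - 1) := by nlinarith
  rw [kummerTerm_sub_one_add_mul (by omega)]
  positivity

theorem truncation_suffices_general (b q w δ : ℝ) (N : ℕ) (hN : 0 < N)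
    (hb0 : 0 < b) (hb1 : b < 1) (hq : 0 < q) (hw : 0 ≤ w)
    (hδl : (1 - b) / (b + N - 1) < δ)
    (hf : 0 ≤ (1 + δ) + ((b - 1 + δ * b) / (b + q + 1)) * w +
      ∑ i ∈ Finset.Icc 2 N, (b - 1 + δ * (b + i - 1)) *
        ((ascPochhammer ℝ (i-1)).eval b / (ascPochhammer ℝ i).eval (b + q + 1)) *
        w ^ i / (Nat.factorial i)) :
    0 ≤ kummerM (b - 1) (b + q + 1) w + δ * kummerM b (b + q + 1) w ∧
    kummerM (b - 1) (b + q + 1) w / kummerM b (b + q + 1) w ≥ -δ := by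
  set c := b + q + 1
  have hden : 0 < b + N - 1 := by linarith [(Nat.one_le_cast (α := ℝ)).2 hN]
  have hδ : 0 < δ := (div_pos (by linarith) hden).trans hδl
  have hcoef : 0 ≤ b - 1 + δ * (b + N) := by
    nlinarith [(div_lt_iff₀ hden).1 hδl]
  have hsum : 0 ≤ kummerM (b - 1) c w + δ * kummerM b c w := by
    refine hf.trans ?_
    rw [← sum_range_kummerTerm_sub_one_add_mul hN]
    exact sum_range_le_kummerM_sub_one_add_mul N hb0.le (by linarith) (by linarith) hw hδ.le hcoef
  have hM : 1 ≤ kummerM b c w := one_le_kummerM hb0.le (by linarith) hw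
  refine ⟨hsum, ?_⟩
  rw [ge_iff_le, le_div_iff₀ (by linarith)]
  linarith

theorem truncation_suffices (b q w δ : ℝ) (N : ℕ) (hN : 0 < N)
    (hb0 : 0 < b) (hb1 : b < 1) (hq : 0 < q) (hw : 0 ≤ w)
    (hδl : (1 - b) / (b + N - 1) < δ) (hδu : δ < (1 - b) / b)
    (hf : 0 ≤ (1 + δ) + ((b - 1 + δ * b) / (b + q + 1)) * w +
      ∑ i ∈ Finset.Icc 2 N, (b - 1 + δ * (b + i - 1)) *
        ((ascPochhammer ℝ (i-1)).eval b / (ascPochhammer ℝ i).eval (b + q + 1)) *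
        w ^ i / (Nat.factorial i)) :
    0 ≤ kummerM (b - 1) (b + q + 1) w + δ * kummerM b (b + q + 1) w ∧
    kummerM (b - 1) (b + q + 1) w / kummerM b (b + q + 1) w ≥ -δ :=
  truncation_suffices_general b q w δ N hN hb0 hb1 hq hw hδl hf
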